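/- arXiv:1209.6505 — 3 statements merged into one kernel-verified Lean document; each statement's English description precedes it below -/
import Mathlib

section
/- Let N ≥ 3 and let n₀ ≥ 1 be an integer. There exists a constant C > 0, depending only on N and n₀, with the following property. Let n > n₀ be an integer, τ > 0, ρ : closure(B_n) → ℝ continuous with ρ > 0, q : closure(B_n) × [0,τ] → ℝ continuous with q > 0, and χ : ℝ^N → ℝ smooth with 0 ≤ χ ≤ 1 and support contained in B_{n₀}. Suppose ψ : closure(B_n) × [0,τ] → ℝ is continuous together with its first-order time derivative and its first- and second-order spatial derivatives and satisfies the backward parabolic problem: ρ(x) ∂_t ψ(x,t) + q(x,t) Δψ(x,t) = 0 for (x,t) ∈ B_n × (0,τ); ψ(x,t) = 0 for |x| = n and t ∈ (0,τ); ψ(x,τ) = χ(x) for x ∈ closure(B_n). Then 0 ≤ ψ(x,t) ≤ 1 for all (x,t) ∈ B_n × (0,τ), and for every x with |x| = n and every t ∈ (0,τ) one has −C / n^{N−1} ≤ ⟨∇ψ(x,t), x/|x|⟩ ≤ 0, where ∇ denotes the spatial gradient. -/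
open MeasureTheory Metric Set Filter
open scoped RealInnerProductSpace

/-- The Laplacian of `f : ℝ^N → ℝ` at `x`: the sum of the pure second derivatives. -/
noncomputable def lap {N : ℕ} (f : EuclideanSpace ℝ (Fin N) → ℝ)
    (x : EuclideanSpace ℝ (Fin N)) : ℝ :=
  ∑ i : Fin N, iteratedFDeriv ℝ 2 f x ![EuclideanSpace.single i 1, EuclideanSpace.single i 1]

open scoped Topology

section Helpers

variable {F : Type*} [NormedAddCommGroup F] [InnerProductSpace ℝ F]

/-- At a right-endpoint max on `[a,c]`, the derivative is nonpositive. -/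
lemma deriv_nonpos_of_right_max {g : ℝ → ℝ} {d a c : ℝ} (hac : a < c)
    (hg : HasDerivAt g d a) (h : ∀ s ∈ Icc a c, g s ≤ g a) : d ≤ 0 := by
  have hmax : IsLocalMaxOn g (Icc a c) a :=
    eventually_nhdsWithin_of_forall h
  have hy : c - a ∈ posTangentConeAt (Icc a c) a :=
    sub_mem_posTangentConeAt_of_segment_subset (by rw [segment_eq_Icc hac.le])
  have := hmax.hasFDerivWithinAt_nonpos hg.hasFDerivAt.hasFDerivWithinAt hy
  simp at this
  nlinarith [sub_pos.mpr hac]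

lemma deriv_nonneg_of_right_min {g : ℝ → ℝ} {d a c : ℝ} (hac : a < c)
    (hg : HasDerivAt g d a) (h : ∀ s ∈ Icc a c, g a ≤ g s) : 0 ≤ d := by
  have := deriv_nonpos_of_right_max hac hg.neg (fun s hs => neg_le_neg (h s hs))
  linarith

/-- The second directional derivative as the derivative of `s ↦ f'(x+sv)(v)`. -/
lemma hasDerivAt_fderiv_line {f : F → ℝ} {x v : F} (hf : ContDiffAt ℝ 2 f x) :
    HasDerivAt (fun s : ℝ => fderiv ℝ f (x + s • v) v)
      (iteratedFDeriv ℝ 2 f x ![v, v]) 0 := by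
  have h1 : ContDiffAt ℝ 1 (fderiv ℝ f) x := hf.fderiv_right (by norm_num)
  have h2 : HasFDerivAt (fderiv ℝ f) (fderiv ℝ (fderiv ℝ f) x) x :=
    (h1.differentiableAt one_ne_zero).hasFDerivAt
  have hline : HasDerivAt (fun s : ℝ => x + s • v) v 0 := by
    simpa using ((hasDerivAt_id (0:ℝ)).smul_const v).const_add x
  have h3 : HasDerivAt (fun s : ℝ => fderiv ℝ f (x + s • v))
      (fderiv ℝ (fderiv ℝ f) x v) 0 := by
    have h2' : HasFDerivAt (fderiv ℝ f) (fderiv ℝ (fderiv ℝ f) x) (x + (0:ℝ) • v) := by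
      simpa using h2
    exact h2'.comp_hasDerivAt (0:ℝ) hline
  have h4 := h3.clm_apply (hasDerivAt_const (0:ℝ) v)
  simp only [hasDerivAt_const, add_zero, map_zero] at h4
  rw [iteratedFDeriv_two_apply]
  simpa using h4

lemma second_deriv_nonpos_of_localMax {f : F → ℝ} {x v : F}
    (hf : ContDiffAt ℝ 2 f x) (hm : IsLocalMax f x) :
    iteratedFDeriv ℝ 2 f x ![v, v] ≤ 0 := by
  by_contra hQ
  push_neg at hQ
  set Q := iteratedFDeriv ℝ 2 f x ![v, v] with hQdef
  set φ : ℝ → ℝ := fun s => fderiv ℝ f (x + s • v) v with hφdef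
  have hφ : HasDerivAt φ Q 0 := hasDerivAt_fderiv_line hf
  have hφ0 : φ 0 = 0 := by
    simp [hφdef, hm.fderiv_eq_zero]
  -- the line map is continuous
  have hlinecont : Continuous (fun s : ℝ => x + s • v) :=
    continuous_const.add (continuous_id.smul continuous_const)
  have hline0 : Tendsto (fun s : ℝ => x + s • v) (𝓝 0) (𝓝 x) := by
    have := hlinecont.tendsto 0
    simpa using this
  -- eventual differentiability along the line
  have hev : ∀ᶠ y in 𝓝 x, DifferentiableAt ℝ f y :=
    (hf.eventually (by norm_num)).mono fun y hy => hy.differentiableAt two_ne_zero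
  have hev' : ∀ᶠ s in 𝓝 (0:ℝ), DifferentiableAt ℝ f (x + s • v) := hline0.eventually hev
  have hmax' : ∀ᶠ s in 𝓝 (0:ℝ), f (x + s • v) ≤ f x := hline0.eventually hm
  -- positivity of φ on a right neighborhood
  have hslope : Tendsto (slope φ 0) (𝓝[≠] (0:ℝ)) (𝓝 Q) :=
    hasDerivAt_iff_tendsto_slope.mp hφ
  have hslope' : Tendsto (slope φ 0) (𝓝[>] (0:ℝ)) (𝓝 Q) :=
    hslope.mono_left (nhdsWithin_mono _ fun s hs => ne_of_gt hs)
  have hφpos : ∀ᶠ s in 𝓝[>] (0:ℝ), 0 < φ s := by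
    filter_upwards [hslope'.eventually (eventually_gt_nhds hQ),
      self_mem_nhdsWithin] with s hs hs'
    have hs' : (0:ℝ) < s := hs'
    rw [slope_def_field, hφ0, sub_zero, sub_zero] at hs
    have h5 := mul_pos hs hs'
    rwa [div_mul_cancel₀ _ (ne_of_gt hs')] at h5
  -- extract intervals
  obtain ⟨ε₁, hε₁, h₁⟩ := (nhdsGT_basis (0:ℝ)).eventually_iff.mp hφpos
  obtain ⟨ε₂, hε₂, h₂⟩ := Metric.eventually_nhds_iff.mp (hev'.and hmax')
  set ε := min ε₁ ε₂ / 2 with hεdef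
  have hεpos : 0 < ε := by positivity
  have hmin : 0 < min ε₁ ε₂ := lt_min hε₁ hε₂
  have hε₁' : ε < ε₁ := lt_of_lt_of_le (half_lt_self hmin) (min_le_left _ _)
  have hε₂' : ε < ε₂ := lt_of_lt_of_le (half_lt_self hmin) (min_le_right _ _)
  have hg : ∀ s ∈ Icc (0:ℝ) ε, HasDerivAt (fun r => f (x + r • v)) (φ s) s := by
    intro s hs
    have hds : dist s 0 < ε₂ := by
      rw [Real.dist_eq, sub_zero, abs_of_nonneg hs.1]
      exact lt_of_le_of_lt hs.2 hε₂'
    have hdiff := (h₂ hds).1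
    have hline : HasDerivAt (fun r : ℝ => x + r • v) v s := by
      simpa using ((hasDerivAt_id s).smul_const v).const_add x
    exact hdiff.hasFDerivAt.comp_hasDerivAt s hline
  have hcont : ContinuousOn (fun r => f (x + r • v)) (Icc 0 ε) := by
    intro s hs
    exact ((hg s hs).continuousAt).continuousWithinAt
  have hmono : StrictMonoOn (fun r => f (x + r • v)) (Icc 0 ε) := by
    apply strictMonoOn_of_deriv_pos (convex_Icc 0 ε) hcont
    intro s hs
    rw [interior_Icc] at hs
    rw [(hg s ⟨hs.1.le, hs.2.le⟩).deriv]
    exact h₁ ⟨hs.1, lt_trans hs.2 hε₁'⟩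
  have h3 : f (x + (0:ℝ) • v) < f (x + ε • v) :=
    hmono (left_mem_Icc.mpr hεpos.le) (right_mem_Icc.mpr hεpos.le) hεpos
  have h4 : f (x + ε • v) ≤ f x := by
    refine (h₂ ?_).2
    rw [Real.dist_eq, sub_zero, abs_of_nonneg hεpos.le]
    exact hε₂'
  simp only [zero_smul, add_zero] at h3
  linarith

lemma lap_nonpos_of_localMax {N : ℕ} {f : EuclideanSpace ℝ (Fin N) → ℝ}
    {x : EuclideanSpace ℝ (Fin N)} (hf : ContDiffAt ℝ 2 f x) (hm : IsLocalMax f x) :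
    lap f x ≤ 0 :=
  Finset.sum_nonpos fun i _ => second_deriv_nonpos_of_localMax hf hm

lemma lap_sub {N : ℕ} {f g : EuclideanSpace ℝ (Fin N) → ℝ} {x : EuclideanSpace ℝ (Fin N)}
    (hf : ContDiffAt ℝ 2 f x) (hg : ContDiffAt ℝ 2 g x) :
    lap (fun y => f y - g y) x = lap f x - lap g x := by
  have key : ∀ v : EuclideanSpace ℝ (Fin N),
      iteratedFDeriv ℝ 2 (fun y => f y - g y) x ![v, v]
        = iteratedFDeriv ℝ 2 f x ![v, v] - iteratedFDeriv ℝ 2 g x ![v, v] := by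
    intro v
    have hfe : ∀ᶠ y in 𝓝 x, DifferentiableAt ℝ f y :=
      (hf.eventually (by norm_num)).mono fun y hy => hy.differentiableAt two_ne_zero
    have hge : ∀ᶠ y in 𝓝 x, DifferentiableAt ℝ g y :=
      (hg.eventually (by norm_num)).mono fun y hy => hy.differentiableAt two_ne_zero
    have heq : (fun y => fderiv ℝ (fun z => f z - g z) y)
        =ᶠ[𝓝 x] fun y => fderiv ℝ f y - fderiv ℝ g y := by
      filter_upwards [hfe, hge] with y hy hy'
      exact fderiv_sub hy hy'
    have hdf : DifferentiableAt ℝ (fderiv ℝ f) x :=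
      (hf.fderiv_right (by norm_num : (1:WithTop ℕ∞) + 1 ≤ 2)).differentiableAt one_ne_zero
    have hdg : DifferentiableAt ℝ (fderiv ℝ g) x :=
      (hg.fderiv_right (by norm_num : (1:WithTop ℕ∞) + 1 ≤ 2)).differentiableAt one_ne_zero
    rw [iteratedFDeriv_two_apply, iteratedFDeriv_two_apply, iteratedFDeriv_two_apply,
      heq.fderiv_eq, fderiv_fun_sub hdf hdg]
    simp
  simp only [lap, key]
  rw [Finset.sum_sub_distrib]

/-- The parabolic maximum principle on a compact set `S` with "boundary" `B`. -/
lemma maxPrinciple {N : ℕ} {S B : Set (EuclideanSpace ℝ (Fin N))}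
    (hS : IsCompact S) (hBS : B ⊆ S) (hSB : S \ B ⊆ interior S)
    {t₁ τ b : ℝ} (ht : t₁ ≤ τ)
    {u ut : EuclideanSpace ℝ (Fin N) → ℝ → ℝ}
    (hu : ContinuousOn (fun p : EuclideanSpace ℝ (Fin N) × ℝ => u p.1 p.2) (S ×ˢ Icc t₁ τ))
    (hC2 : ∀ t ∈ Icc t₁ τ, ∀ x ∈ S \ B, ContDiffAt ℝ 2 (fun y => u y t) x)
    (hder : ∀ x ∈ S, ∀ t ∈ Icc t₁ τ, HasDerivAt (fun s => u x s) (ut x t) t)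
    (hpde : ∀ x ∈ S \ B, ∀ t ∈ Ico t₁ τ, lap (fun y => u y t) x ≤ 0 → 0 ≤ ut x t)
    (hB : ∀ x ∈ B, ∀ t ∈ Icc t₁ τ, u x t ≤ b)
    (htop : ∀ x ∈ S, u x τ ≤ b) :
    ∀ x ∈ S, ∀ t ∈ Icc t₁ τ, u x t ≤ b := by
  intro x hx t htt
  have claim : ∀ ε : ℝ, 0 < ε → u x t - ε * (τ - t) ≤ b := by
    intro ε hε
    set v : EuclideanSpace ℝ (Fin N) × ℝ → ℝ := fun p => u p.1 p.2 - ε * (τ - p.2) with hvdef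
    have hK : IsCompact (S ×ˢ Icc t₁ τ) := hS.prod isCompact_Icc
    have hvc : ContinuousOn v (S ×ˢ Icc t₁ τ) :=
      hu.sub ((continuous_const.mul (continuous_const.sub continuous_snd)).continuousOn)
    obtain ⟨p₀, hp₀K, hmax⟩ := hK.exists_isMaxOn ⟨(x, t), mem_prod.mpr ⟨hx, htt⟩⟩ hvc
    obtain ⟨hx₀, ht₀⟩ := mem_prod.mp hp₀K
    by_cases hvb : v p₀ ≤ b
    · calc u x t - ε * (τ - t) = v (x, t) := rfl
        _ ≤ v p₀ := hmax (mem_prod.mpr ⟨hx, htt⟩)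
        _ ≤ b := hvb
    · exfalso
      push_neg at hvb
      set x₀ := p₀.1
      set t₀ := p₀.2
      have hεnn : 0 ≤ ε * (τ - t₀) := mul_nonneg hε.le (by linarith [ht₀.2])
      have hx₀B : x₀ ∉ B := by
        intro hmem
        have := hB x₀ hmem t₀ ht₀
        have : v p₀ ≤ b := by
          simp only [hvdef]
          linarith
        linarith
      have ht₀τ : t₀ ≠ τ := by
        intro hmem
        have h2 : v p₀ ≤ b := by
          show u p₀.1 p₀.2 - ε * (τ - p₀.2) ≤ b
          rw [show p₀.2 = τ from hmem]
          simpa using htop p₀.1 hx₀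
        linarith
      have ht₀' : t₀ ∈ Ico t₁ τ := ⟨ht₀.1, lt_of_le_of_ne ht₀.2 ht₀τ⟩
      have hx₀int : x₀ ∈ interior S := hSB ⟨hx₀, hx₀B⟩
      -- local max in space
      have hlm : IsLocalMax (fun y => u y t₀) x₀ := by
        filter_upwards [mem_interior_iff_mem_nhds.mp hx₀int] with y hy
        have h1 : v (y, t₀) ≤ v p₀ := hmax (mem_prod.mpr ⟨hy, ht₀⟩)
        simp only [hvdef] at h1 ⊢
        linarith
      have hlap : lap (fun y => u y t₀) x₀ ≤ 0 :=
        lap_nonpos_of_localMax (hC2 t₀ ht₀ x₀ ⟨hx₀, hx₀B⟩) hlm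
      have hut : 0 ≤ ut x₀ t₀ := hpde x₀ ⟨hx₀, hx₀B⟩ t₀ ht₀' hlap
      -- time derivative at the max
      have hd : HasDerivAt (fun s => u x₀ s - ε * (τ - s)) (ut x₀ t₀ + ε) t₀ := by
        have h1 := (hder x₀ hx₀ t₀ ht₀)
        have h2 : HasDerivAt (fun s : ℝ => ε * (τ - s)) (-ε) t₀ := by
          simpa using (((hasDerivAt_id t₀).const_sub τ)).const_mul ε
        have h3 := h1.sub h2
        rw [sub_neg_eq_add] at h3
        exact h3
      have hle : ut x₀ t₀ + ε ≤ 0 := by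
        apply deriv_nonpos_of_right_max ht₀'.2 hd
        intro s hs
        have h1 : v (x₀, s) ≤ v p₀ := hmax (mem_prod.mpr ⟨hx₀, ⟨le_trans ht₀.1 hs.1, hs.2⟩⟩)
        simpa only [hvdef] using h1
      linarith
  by_contra hcon
  push_neg at hcon
  have h2 : 0 < (u x t - b) / (τ - t + 1) := by
    have h4 : 0 ≤ τ - t := by linarith [htt.2]
    have h5 : 0 < u x t - b := by linarith
    positivity
  have := claim _ h2
  have h3 : (u x t - b) / (τ - t + 1) * (τ - t) < u x t - b := by
    rw [div_mul_eq_mul_div, div_lt_iff₀ (by linarith [htt.2])]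
    have h4 : 0 ≤ τ - t := by linarith [htt.2]
    nlinarith
  linarith

/-- The barrier function. -/
noncomputable def Wb {N : ℕ} (c p K : ℝ) (y : EuclideanSpace ℝ (Fin N)) : ℝ :=
  c * ((‖y‖ ^ 2 : ℝ) ^ p - K)

lemma hasFDerivAt_Wb {N : ℕ} {c p K : ℝ} {y : EuclideanSpace ℝ (Fin N)} (hy : y ≠ 0) :
    HasFDerivAt (Wb c p K)
      (c • ((p * (‖y‖ ^ 2 : ℝ) ^ (p - 1)) • ((2 : ℝ) • innerSL ℝ y))) y := by
  have ha : (0:ℝ) < ‖y‖ ^ 2 := pow_pos (norm_pos_iff.mpr hy) 2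
  have hF : HasFDerivAt (fun z : EuclideanSpace ℝ (Fin N) => (‖z‖ ^ 2 : ℝ))
      ((2 : ℝ) • innerSL ℝ y) y := by
    have := (hasStrictFDerivAt_norm_sq y).hasFDerivAt
    refine this.congr_fderiv ?_
    ext v
    simp
  have hr : HasDerivAt (fun s : ℝ => s ^ p) (p * (‖y‖ ^ 2 : ℝ) ^ (p - 1)) (‖y‖ ^ 2 : ℝ) :=
    Real.hasDerivAt_rpow_const (Or.inl ha.ne')
  have h1 := hr.comp_hasFDerivAt y hF
  exact (h1.sub_const K).const_mul c

lemma contDiffAt_Wb {N : ℕ} {c p K : ℝ} {y : EuclideanSpace ℝ (Fin N)} (hy : y ≠ 0) :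
    ContDiffAt ℝ 2 (Wb c p K : EuclideanSpace ℝ (Fin N) → ℝ) y := by
  have ha : (‖y‖ ^ 2 : ℝ) ≠ 0 := (pow_pos (norm_pos_iff.mpr hy) 2).ne'
  have h1 : ContDiffAt ℝ 2 (fun z : EuclideanSpace ℝ (Fin N) => (‖z‖ ^ 2 : ℝ) ^ p) y :=
    (Real.contDiffAt_rpow_const_of_ne ha).comp y ((contDiff_norm_sq ℝ).contDiffAt)
  exact contDiffAt_const.mul (h1.sub contDiffAt_const)

lemma norm_sq_eucl {N : ℕ} (y : EuclideanSpace ℝ (Fin N)) :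
    (‖y‖ ^ 2 : ℝ) = ∑ i, (y i) ^ 2 := by
  rw [EuclideanSpace.norm_eq, Real.sq_sqrt (Finset.sum_nonneg fun i _ => sq_nonneg _)]
  simp

lemma lap_Wb_eq_zero {N : ℕ} {c p K : ℝ} (hp : 2 * p = 2 - (N : ℝ))
    {y : EuclideanSpace ℝ (Fin N)} (hy : y ≠ 0) :
    lap (Wb c p K) y = 0 := by
  have ha : (0:ℝ) < ‖y‖ ^ 2 := pow_pos (norm_pos_iff.mpr hy) 2
  set a : ℝ := ‖y‖ ^ 2 with hadef
  have key : ∀ i : Fin N,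
      iteratedFDeriv ℝ 2 (Wb c p K : EuclideanSpace ℝ (Fin N) → ℝ) y
        ![EuclideanSpace.single i 1, EuclideanSpace.single i 1]
      = (2 * c * p) * ((p - 1) * a ^ (p - 2) * (2 * y i) * (y i) + a ^ (p - 1)) := by
    intro i
    set v : EuclideanSpace ℝ (Fin N) := EuclideanSpace.single i 1 with hvdef
    have hv1 : ‖v‖ = 1 := by simp [hvdef]
    have hyv : ⟪y, v⟫ = y i := by simp [hvdef, EuclideanSpace.inner_single_right]
    have hQ := hasDerivAt_fderiv_line (f := (Wb c p K : EuclideanSpace ℝ (Fin N) → ℝ))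
      (x := y) (v := v) (contDiffAt_Wb hy)
    -- the explicit 1D function
    set A : ℝ → ℝ := fun s => a + 2 * (y i) * s + s ^ 2 with hAdef
    set G : ℝ → ℝ := fun s => c * ((p * (A s) ^ (p - 1)) * (2 * ((y i) + s))) with hGdef
    have hnormline : ∀ s : ℝ, (‖y + s • v‖ ^ 2 : ℝ) = A s := by
      intro s
      rw [hAdef]
      have := norm_add_sq_real y (s • v)
      rw [this, real_inner_smul_right, hyv, norm_smul]
      simp [hv1, mul_pow]
      ring
    have hinnerline : ∀ s : ℝ, ⟪y + s • v, v⟫ = y i + s := by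
      intro s
      rw [inner_add_left, real_inner_smul_left, hyv, real_inner_self_eq_norm_sq, hv1]
      simp
    -- eventually `y + s • v ≠ 0`
    have hline0 : Tendsto (fun s : ℝ => y + s • v) (𝓝 0) (𝓝 y) := by
      have : Continuous (fun s : ℝ => y + s • v) :=
        continuous_const.add (continuous_id.smul continuous_const)
      simpa using this.tendsto 0
    have hne : ∀ᶠ s in 𝓝 (0:ℝ), y + s • v ≠ 0 :=
      hline0.eventually (eventually_ne_nhds hy)
    have heq : (fun s : ℝ => fderiv ℝ (Wb c p K : EuclideanSpace ℝ (Fin N) → ℝ) (y + s • v) v)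
        =ᶠ[𝓝 (0:ℝ)] G := by
      filter_upwards [hne] with s hs
      rw [(hasFDerivAt_Wb hs).fderiv]
      simp only [hGdef, ContinuousLinearMap.coe_smul', Pi.smul_apply, innerSL_apply_apply,
        smul_eq_mul]
      rw [hinnerline s, hnormline s]
    -- derivative of G at 0
    have hA0 : A 0 = a := by simp [hAdef]
    have hA : HasDerivAt A (2 * (y i)) 0 := by
      have h1 : HasDerivAt (fun s : ℝ => a + 2 * (y i) * s) (2 * (y i)) 0 := by
        simpa using ((hasDerivAt_id (0:ℝ)).const_mul (2 * (y i))).const_add a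
      have h2 : HasDerivAt (fun s : ℝ => s ^ 2) (0 : ℝ) 0 := by
        simpa using hasDerivAt_pow 2 (0:ℝ)
      have h3 := h1.add h2
      rw [add_zero] at h3
      exact h3
    have hApow : HasDerivAt (fun s => (A s) ^ (p - 1))
        ((p - 1) * a ^ (p - 2) * (2 * (y i))) 0 := by
      have := (Real.hasDerivAt_rpow_const (x := A 0) (p := p - 1)
        (Or.inl (by rw [hA0]; exact ha.ne'))).comp 0 hA
      rw [hA0] at this
      rw [show p - 2 = p - 1 - 1 by ring]
      exact this
    have hlin : HasDerivAt (fun s : ℝ => y i + s) 1 0 := by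
      simpa using (hasDerivAt_id (0:ℝ)).const_add (y i)
    have hG : HasDerivAt G
        ((2 * c * p) * ((p - 1) * a ^ (p - 2) * (2 * y i) * (y i) + a ^ (p - 1))) 0 := by
      have h1 := (hApow.mul hlin).const_mul (c * p * 2)
      have h2 : G = fun s => (c * p * 2) * ((A s) ^ (p - 1) * (y i + s)) := by
        funext s
        simp only [hGdef]
        ring
      rw [h2]
      refine h1.congr_deriv ?_
      rw [hA0]
      ring
    have hQ' := (heq.hasDerivAt_iff).mpr hG
    exact hQ.unique hQ'
  have hsum2 : ∑ i : Fin N, (y i) ^ 2 = a := by rw [hadef, norm_sq_eucl]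
  have h2 : a ^ (p - 2) * a = a ^ (p - 1) := by
    rw [show p - 1 = (p - 2) + 1 by ring, Real.rpow_add_one ha.ne']
  have hstep : ∑ i : Fin N, ((p - 1) * a ^ (p - 2) * (2 * y i) * (y i) + a ^ (p - 1))
      = (2 * (p - 1) + (N : ℝ)) * a ^ (p - 1) := by
    rw [Finset.sum_add_distrib, Finset.sum_const, Finset.card_univ, Fintype.card_fin]
    have h1 : ∑ i : Fin N, (p - 1) * a ^ (p - 2) * (2 * y i) * (y i)
        = (2 * (p - 1) * a ^ (p - 2)) * ∑ i, (y i) ^ 2 := by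
      rw [Finset.mul_sum]
      congr 1
      funext i
      ring
    rw [h1, hsum2, nsmul_eq_mul]
    calc (2 * (p - 1) * a ^ (p - 2)) * a + (N : ℝ) * a ^ (p - 1)
        = 2 * (p - 1) * (a ^ (p - 2) * a) + (N : ℝ) * a ^ (p - 1) := by ring
      _ = (2 * (p - 1) + (N : ℝ)) * a ^ (p - 1) := by rw [h2]; ring
  have hzero : 2 * (p - 1) + (N : ℝ) = 0 := by linarith
  simp only [lap, key]
  rw [← Finset.mul_sum, hstep, hzero]
  ring

lemma lap_neg {N : ℕ} (f : EuclideanSpace ℝ (Fin N) → ℝ) (x : EuclideanSpace ℝ (Fin N)) :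
    lap (fun y => -f y) x = -lap f x := by
  simp only [lap]
  rw [← Finset.sum_neg_distrib]
  congr 1
  funext i
  have h1 : (fun y => -f y) = -f := rfl
  rw [h1, iteratedFDeriv_neg_apply]
  simp

end Helpers

set_option maxHeartbeats 1000000 in
/-- Lemma 4.1: any solution of the backward parabolic problem
`ρ ∂ₜ ψ + q Δψ = 0` in `B_n × (0,τ)` with `ψ = 0` on `∂B_n` and terminal datum
`χ` supported in `B_{n₀}`, `0 ≤ χ ≤ 1`, satisfies `0 ≤ ψ ≤ 1`, and its outer
normal derivative on `∂B_n` lies in `[-C/n^{N-1}, 0]`, with `C = C(N, n₀)`. -/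
theorem backward_problem_estimates (N : ℕ) (hN : 3 ≤ N) (n₀ : ℕ) (hn₀ : 1 ≤ n₀) :
    ∃ C : ℝ, 0 < C ∧
      ∀ n : ℕ, n₀ < n → ∀ τ : ℝ, 0 < τ →
      ∀ ρ : EuclideanSpace ℝ (Fin N) → ℝ,
        ContinuousOn ρ (closedBall 0 (n : ℝ)) →
        (∀ x ∈ closedBall (0 : EuclideanSpace ℝ (Fin N)) (n : ℝ), 0 < ρ x) →
      ∀ q : EuclideanSpace ℝ (Fin N) → ℝ → ℝ,
        ContinuousOn (fun p : EuclideanSpace ℝ (Fin N) × ℝ => q p.1 p.2)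
          (closedBall 0 (n : ℝ) ×ˢ Icc 0 τ) →
        (∀ x ∈ closedBall (0 : EuclideanSpace ℝ (Fin N)) (n : ℝ),
          ∀ t ∈ Icc (0 : ℝ) τ, 0 < q x t) →
      ∀ χ : EuclideanSpace ℝ (Fin N) → ℝ,
        ContDiff ℝ (⊤ : ℕ∞) χ → (∀ x, 0 ≤ χ x) → (∀ x, χ x ≤ 1) →
        tsupport χ ⊆ ball (0 : EuclideanSpace ℝ (Fin N)) (n₀ : ℝ) →
      ∀ ψ ψt : EuclideanSpace ℝ (Fin N) → ℝ → ℝ,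
        -- `ψ` is continuous on `closure(B_n) × [0,τ]` together with its first-order
        -- time derivative and its first- and second-order spatial derivatives:
        ContinuousOn (fun p : EuclideanSpace ℝ (Fin N) × ℝ => ψ p.1 p.2)
          (closedBall 0 (n : ℝ) ×ˢ Icc 0 τ) →
        ContinuousOn (fun p : EuclideanSpace ℝ (Fin N) × ℝ => ψt p.1 p.2)
          (closedBall 0 (n : ℝ) ×ˢ Icc 0 τ) →
        (∀ x ∈ closedBall (0 : EuclideanSpace ℝ (Fin N)) (n : ℝ), ∀ t ∈ Icc (0 : ℝ) τ,
          HasDerivAt (fun s => ψ x s) (ψt x t) t) →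
        (∀ t ∈ Icc (0 : ℝ) τ, ContDiff ℝ 2 (fun x => ψ x t)) →
        ContinuousOn (fun p : EuclideanSpace ℝ (Fin N) × ℝ => lap (fun x => ψ x p.2) p.1)
          (closedBall 0 (n : ℝ) ×ˢ Icc 0 τ) →
        ContinuousOn (fun p : EuclideanSpace ℝ (Fin N) × ℝ => gradient (fun x => ψ x p.2) p.1)
          (closedBall 0 (n : ℝ) ×ˢ Icc 0 τ) →
        -- the backward parabolic problem:
        (∀ x ∈ ball (0 : EuclideanSpace ℝ (Fin N)) (n : ℝ), ∀ t ∈ Ioo (0 : ℝ) τ,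
          ρ x * ψt x t + q x t * lap (fun y => ψ y t) x = 0) →
        (∀ x ∈ sphere (0 : EuclideanSpace ℝ (Fin N)) (n : ℝ), ∀ t ∈ Ioo (0 : ℝ) τ,
          ψ x t = 0) →
        (∀ x ∈ closedBall (0 : EuclideanSpace ℝ (Fin N)) (n : ℝ), ψ x τ = χ x) →
        -- conclusions:
        (∀ x ∈ ball (0 : EuclideanSpace ℝ (Fin N)) (n : ℝ), ∀ t ∈ Ioo (0 : ℝ) τ,
          0 ≤ ψ x t ∧ ψ x t ≤ 1) ∧
        (∀ x ∈ sphere (0 : EuclideanSpace ℝ (Fin N)) (n : ℝ), ∀ t ∈ Ioo (0 : ℝ) τ,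
          -(C / (n : ℝ) ^ (N - 1)) ≤ ⟪gradient (fun y => ψ y t) x, ‖x‖⁻¹ • x⟫ ∧
            ⟪gradient (fun y => ψ y t) x, ‖x‖⁻¹ • x⟫ ≤ 0) := by
  classical
  have hN3 : (3:ℝ) ≤ (N:ℝ) := by exact_mod_cast hN
  have hN2 : (0:ℝ) < (N:ℝ) - 2 := by linarith
  set p : ℝ := (2 - (N:ℝ)) / 2 with hpdef
  have hp : 2 * p = 2 - (N:ℝ) := by rw [hpdef]; ring
  have hpneg : p < 0 := by rw [hpdef]; linarith
  have hn₀1 : (1:ℝ) ≤ (n₀:ℝ) := by exact_mod_cast hn₀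
  have hn₀pos : (0:ℝ) < (n₀:ℝ) := by linarith
  set δ : ℝ := ((n₀:ℝ)^2)^p - (((n₀:ℝ)+1)^2)^p with hδdef
  have hδpos : 0 < δ := by
    rw [hδdef]
    have := Real.rpow_lt_rpow_of_neg (x := (n₀:ℝ)^2) (y := ((n₀:ℝ)+1)^2)
      (by positivity) (by nlinarith) hpneg
    linarith
  refine ⟨((N:ℝ) - 2) * δ⁻¹, by positivity, ?_⟩
  intro n hn τ hτ ρ hρc hρ q hqc hq χ hχsm hχ0 hχ1 hχsupp ψ ψt hψc hψtc hψd hψC2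
    hlapc hgradc heqn hbdry hterm
  set C : ℝ := ((N:ℝ) - 2) * δ⁻¹ with hCdef
  have hn' : (n₀:ℝ) < (n:ℝ) := by exact_mod_cast hn
  have hnn₀1 : (n₀:ℝ) + 1 ≤ (n:ℝ) := by exact_mod_cast Nat.succ_le_of_lt hn
  have hnpos : (0:ℝ) < (n:ℝ) := by linarith
  -- the terminal datum vanishes outside `B_{n₀}`
  have hχzero : ∀ y : EuclideanSpace ℝ (Fin N), (n₀:ℝ) ≤ ‖y‖ → χ y = 0 := by
    intro y hy
    apply image_eq_zero_of_notMem_tsupport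
    intro hmem
    have := hχsupp hmem
    rw [mem_ball, dist_zero_right] at this
    linarith
  -- barrier constants
  set K : ℝ := ((n:ℝ)^2)^p with hKdef
  set D : ℝ := ((n₀:ℝ)^2)^p - K with hDdef
  have hD : 0 < D := by
    rw [hDdef, hKdef]
    have := Real.rpow_lt_rpow_of_neg (x := (n₀:ℝ)^2) (y := (n:ℝ)^2)
      (by positivity) (by nlinarith) hpneg
    linarith
  set c : ℝ := D⁻¹ with hcdef
  have hc : 0 < c := inv_pos.mpr hD
  have hcδ : c ≤ δ⁻¹ := by
    apply inv_anti₀ hδpos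
    rw [hδdef, hDdef, hKdef]
    have := Real.rpow_le_rpow_of_nonpos (x := ((n₀:ℝ)+1)^2) (y := (n:ℝ)^2)
      (by positivity) (by nlinarith) hpneg.le
    linarith
  -- geometric facts
  have hSc : IsCompact (closedBall (0:EuclideanSpace ℝ (Fin N)) (n:ℝ)) :=
    isCompact_closedBall _ _
  have hSB1 : closedBall (0:EuclideanSpace ℝ (Fin N)) (n:ℝ)
      \ sphere 0 (n:ℝ) ⊆ interior (closedBall 0 (n:ℝ)) := by
    intro x hx
    rw [interior_closedBall 0 (ne_of_gt hnpos)]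
    rw [mem_ball, dist_zero_right]
    have h1 : ‖x‖ ≤ n := by
      have := hx.1; rwa [mem_closedBall, dist_zero_right] at this
    have h2 : ‖x‖ ≠ n := by
      intro h
      exact hx.2 (by rwa [mem_sphere_zero_iff_norm])
    exact lt_of_le_of_ne h1 h2
  have hballmem : ∀ x : EuclideanSpace ℝ (Fin N),
      x ∈ closedBall (0:EuclideanSpace ℝ (Fin N)) (n:ℝ) \ sphere 0 (n:ℝ) →
      x ∈ ball (0:EuclideanSpace ℝ (Fin N)) (n:ℝ) := by
    intro x hx
    have := hSB1 hx
    rwa [interior_closedBall 0 (ne_of_gt hnpos)] at this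
  -- positivity of the time derivative at spatial maxima, from the PDE
  have hpde_sign : ∀ x ∈ ball (0:EuclideanSpace ℝ (Fin N)) (n:ℝ), ∀ t ∈ Ioo (0:ℝ) τ,
      lap (fun y => ψ y t) x ≤ 0 → 0 ≤ ψt x t := by
    intro x hx t ht hlap
    have hρx := hρ x (ball_subset_closedBall hx)
    have hqx := hq x (ball_subset_closedBall hx) t ⟨ht.1.le, ht.2.le⟩
    have heq := heqn x hx t ht
    by_contra hneg
    push_neg at hneg
    have h1 : ρ x * ψt x t < 0 := mul_neg_of_pos_of_neg hρx hneg
    have h2 : q x t * lap (fun y => ψ y t) x ≤ 0 := mul_nonpos_of_nonneg_of_nonpos hqx.le hlap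
    linarith
  -- Part 1a: ψ ≤ 1
  have P1 : ∀ t₁ ∈ Ioo (0:ℝ) τ, ∀ x ∈ closedBall (0:EuclideanSpace ℝ (Fin N)) (n:ℝ),
      ∀ t ∈ Icc t₁ τ, ψ x t ≤ 1 := by
    intro t₁ ht₁
    refine maxPrinciple hSc sphere_subset_closedBall hSB1 ht₁.2.le
      (hψc.mono (prod_mono subset_rfl (Icc_subset_Icc ht₁.1.le le_rfl)))
      (fun t ht x _ => (hψC2 t ⟨ht₁.1.le.trans ht.1, ht.2⟩).contDiffAt)
      (fun x hx t ht => hψd x hx t ⟨ht₁.1.le.trans ht.1, ht.2⟩)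
      (fun x hx t ht hlap => hpde_sign x (hballmem x hx) t ⟨ht₁.1.trans_le ht.1, ht.2⟩ hlap)
      ?_ ?_
    · intro x hx t ht
      rcases eq_or_lt_of_le ht.2 with heq | hlt
      · rw [heq, hterm x (sphere_subset_closedBall hx)]
        exact hχ1 x
      · rw [hbdry x hx t ⟨ht₁.1.trans_le ht.1, hlt⟩]
        exact zero_le_one
    · intro x hx
      rw [hterm x hx]
      exact hχ1 x
  -- Part 1b: 0 ≤ ψ
  have P0 : ∀ t₁ ∈ Ioo (0:ℝ) τ, ∀ x ∈ closedBall (0:EuclideanSpace ℝ (Fin N)) (n:ℝ),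
      ∀ t ∈ Icc t₁ τ, 0 ≤ ψ x t := by
    intro t₁ ht₁
    have key : ∀ x ∈ closedBall (0:EuclideanSpace ℝ (Fin N)) (n:ℝ),
        ∀ t ∈ Icc t₁ τ, -ψ x t ≤ 0 := by
      refine maxPrinciple (u := fun y s => -ψ y s) (ut := fun y s => -ψt y s)
        hSc sphere_subset_closedBall hSB1 ht₁.2.le
        (ContinuousOn.neg (hψc.mono (prod_mono subset_rfl (Icc_subset_Icc ht₁.1.le le_rfl))))
        (fun t ht x _ => ((hψC2 t ⟨ht₁.1.le.trans ht.1, ht.2⟩).neg).contDiffAt)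
        (fun x hx t ht => (hψd x hx t ⟨ht₁.1.le.trans ht.1, ht.2⟩).neg)
        ?_ ?_ ?_
      · intro x hx t ht hlap
        show 0 ≤ -ψt x t
        rw [lap_neg (fun y => ψ y t) x] at hlap
        have hlap' : 0 ≤ lap (fun y => ψ y t) x := by linarith
        have hρx := hρ x (hx.1)
        have hqx := hq x hx.1 t ⟨ht₁.1.le.trans ht.1, ht.2.le⟩
        have heq := heqn x (hballmem x hx) t ⟨ht₁.1.trans_le ht.1, ht.2⟩
        simp only [neg_nonneg]
        by_contra hneg
        push_neg at hneg
        have h1 : 0 < ρ x * ψt x t := mul_pos hρx hneg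
        have h2 : 0 ≤ q x t * lap (fun y => ψ y t) x := mul_nonneg hqx.le hlap'
        linarith
      · intro x hx t ht
        show -ψ x t ≤ 0
        rcases eq_or_lt_of_le ht.2 with heq | hlt
        · rw [heq, hterm x (sphere_subset_closedBall hx)]
          simpa using hχ0 x
        · rw [hbdry x hx t ⟨ht₁.1.trans_le ht.1, hlt⟩]
          simp
      · intro x hx
        show -ψ x τ ≤ 0
        rw [hterm x hx]
        simpa using hχ0 x
    intro x hx t ht
    have := key x hx t ht
    linarith
  -- the annulus
  set S₂ : Set (EuclideanSpace ℝ (Fin N)) := closedBall 0 (n:ℝ) \ ball 0 (n₀:ℝ) with hS₂def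
  set B₂ : Set (EuclideanSpace ℝ (Fin N)) := sphere 0 (n:ℝ) ∪ sphere 0 (n₀:ℝ) with hB₂def
  have hnormS₂ : ∀ y ∈ S₂, (n₀:ℝ) ≤ ‖y‖ ∧ ‖y‖ ≤ (n:ℝ) := by
    intro y hy
    obtain ⟨h1, h2⟩ := hy
    rw [mem_closedBall, dist_zero_right] at h1
    rw [mem_ball, dist_zero_right] at h2
    exact ⟨le_of_not_gt h2, h1⟩
  have hneS₂ : ∀ y ∈ S₂, y ≠ (0:EuclideanSpace ℝ (Fin N)) := by
    intro y hy h0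
    have := (hnormS₂ y hy).1
    rw [h0] at this
    simp at this
    linarith
  have hS₂c : IsCompact S₂ := hSc.diff isOpen_ball
  have hBS₂ : B₂ ⊆ S₂ := by
    intro x hx
    constructor
    · rcases hx with h | h
      · exact sphere_subset_closedBall h
      · rw [mem_sphere_zero_iff_norm] at h
        rw [mem_closedBall, dist_zero_right, h]
        linarith
    · rcases hx with h | h <;> rw [mem_sphere_zero_iff_norm] at h <;>
        rw [mem_ball, dist_zero_right, h] <;> simp <;> linarith
  have hSB₂ : S₂ \ B₂ ⊆ interior S₂ := by
    intro x hx
    have h1 := (hnormS₂ x hx.1).1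
    have h2 := (hnormS₂ x hx.1).2
    have h3 : ‖x‖ ≠ (n:ℝ) := fun h => hx.2 (Or.inl (mem_sphere_zero_iff_norm.mpr h))
    have h4 : ‖x‖ ≠ (n₀:ℝ) := fun h => hx.2 (Or.inr (mem_sphere_zero_iff_norm.mpr h))
    apply interior_maximal (t := ball (0:EuclideanSpace ℝ (Fin N)) (n:ℝ)
      ∩ (closedBall 0 (n₀:ℝ))ᶜ)
    · intro y hy
      constructor
      · exact ball_subset_closedBall hy.1
      · intro hmem
        exact hy.2 (ball_subset_closedBall hmem)
    · exact isOpen_ball.inter isClosed_closedBall.isOpen_compl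
    · constructor
      · rw [mem_ball, dist_zero_right]
        exact lt_of_le_of_ne h2 h3
      · intro hmem
        rw [mem_closedBall, dist_zero_right] at hmem
        exact h4 (le_antisymm hmem h1)
  have hS₂sub : S₂ ⊆ closedBall (0:EuclideanSpace ℝ (Fin N)) (n:ℝ) := fun y hy => hy.1
  -- values of the barrier
  have hWn : ∀ y : EuclideanSpace ℝ (Fin N), ‖y‖ = (n:ℝ) → Wb c p K y = 0 := by
    intro y hy
    simp only [Wb, hy, hKdef]
    ring
  have hWn₀ : ∀ y : EuclideanSpace ℝ (Fin N), ‖y‖ = (n₀:ℝ) → Wb c p K y = 1 := by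
    intro y hy
    simp only [Wb, hy, hcdef, hDdef]
    rw [← hDdef]
    exact inv_mul_cancel₀ hD.ne'
  have hWnonneg : ∀ y ∈ S₂, 0 ≤ Wb c p K y := by
    intro y hy
    have h1 := (hnormS₂ y hy).1
    have h2 := (hnormS₂ y hy).2
    have h3 : (0:ℝ) < ‖y‖ := by linarith
    have h4 : K ≤ (‖y‖^2)^p := by
      rw [hKdef]
      exact Real.rpow_le_rpow_of_nonpos (by positivity) (by nlinarith) hpneg.le
    simp only [Wb]
    have h5 : 0 ≤ (‖y‖^2)^p - K := by linarith
    exact mul_nonneg hc.le h5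
  -- Part 2 (comparison): ψ ≤ W on the annulus
  have P2 : ∀ t₁ ∈ Ioo (0:ℝ) τ, ∀ x ∈ S₂, ∀ t ∈ Icc t₁ τ, ψ x t ≤ Wb c p K x := by
    intro t₁ ht₁
    have key : ∀ x ∈ S₂, ∀ t ∈ Icc t₁ τ, ψ x t - Wb c p K x ≤ 0 := by
      refine maxPrinciple (u := fun y s => ψ y s - Wb c p K y) (ut := fun y s => ψt y s)
        hS₂c hBS₂ hSB₂ ht₁.2.le ?_
        (fun t ht x hx => ((hψC2 t ⟨ht₁.1.le.trans ht.1, ht.2⟩).contDiffAt).sub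
          (contDiffAt_Wb (hneS₂ x hx.1)))
        (fun x hx t ht => (hψd x (hS₂sub hx) t ⟨ht₁.1.le.trans ht.1, ht.2⟩).sub_const _)
        ?_ ?_ ?_
      · -- continuity
        apply ContinuousOn.sub
        · exact hψc.mono (prod_mono hS₂sub (Icc_subset_Icc ht₁.1.le le_rfl))
        · intro pr hpr
          have hne := hneS₂ pr.1 (mem_prod.mp hpr).1
          exact (((contDiffAt_Wb hne).continuousAt).comp
            continuousAt_fst).continuousWithinAt
      · -- PDE sign condition
        intro x hx t ht hlap
        have hxball : x ∈ ball (0:EuclideanSpace ℝ (Fin N)) (n:ℝ) := by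
          have h2 := (hnormS₂ x hx.1).2
          have h3 : ‖x‖ ≠ (n:ℝ) := fun h => hx.2 (Or.inl (mem_sphere_zero_iff_norm.mpr h))
          rw [mem_ball, dist_zero_right]
          exact lt_of_le_of_ne h2 h3
        have hne := hneS₂ x hx.1
        rw [lap_sub ((hψC2 t ⟨ht₁.1.le.trans ht.1, ht.2.le⟩).contDiffAt)
          (contDiffAt_Wb hne), lap_Wb_eq_zero hp hne, sub_zero] at hlap
        exact hpde_sign x hxball t ⟨ht₁.1.trans_le ht.1, ht.2⟩ hlap
      · -- lateral boundary
        intro x hx t ht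
        show ψ x t - Wb c p K x ≤ 0
        rcases hx with h | h
        · rw [mem_sphere_zero_iff_norm] at h
          rw [hWn x h]
          rcases eq_or_lt_of_le ht.2 with heq | hlt
          · rw [heq, hterm x (by rw [mem_closedBall, dist_zero_right, h]),
              hχzero x (by rw [h]; linarith)]
            norm_num
          · rw [hbdry x (mem_sphere_zero_iff_norm.mpr h) t ⟨ht₁.1.trans_le ht.1, hlt⟩]
            norm_num
        · rw [mem_sphere_zero_iff_norm] at h
          rw [hWn₀ x h]
          have := P1 t₁ ht₁ x (by rw [mem_closedBall, dist_zero_right, h]; linarith) t ht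
          linarith
      · -- top boundary
        intro y hy
        show ψ y τ - Wb c p K y ≤ 0
        rw [hterm y (hS₂sub hy), hχzero y (hnormS₂ y hy).1]
        have := hWnonneg y hy
        linarith
    intro x hx t ht
    have := key x hx t ht
    linarith
  constructor
  · -- conclusion 1: 0 ≤ ψ ≤ 1
    intro x hx t ht
    exact ⟨P0 t ht x (ball_subset_closedBall hx) t ⟨le_refl t, ht.2.le⟩,
           P1 t ht x (ball_subset_closedBall hx) t ⟨le_refl t, ht.2.le⟩⟩
  · -- conclusion 2: boundary gradient bounds
    intro x hx t ht
    have hxn : ‖x‖ = (n:ℝ) := mem_sphere_zero_iff_norm.mp hx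
    have hnne : (n:ℝ) ≠ 0 := hnpos.ne'
    set ν : EuclideanSpace ℝ (Fin N) := ‖x‖⁻¹ • x with hνdef
    have hν1 : ‖ν‖ = 1 := by
      rw [hνdef, norm_smul, norm_inv, norm_norm, inv_mul_cancel₀ (by rw [hxn]; exact hnne)]
    have hxν : ⟪x, ν⟫ = (n:ℝ) := by
      rw [hνdef, real_inner_smul_right, real_inner_self_eq_norm_sq, hxn]
      field_simp
    have hnorm : ∀ s : ℝ, 0 ≤ s → s ≤ (n:ℝ) → ‖x + s • (-ν)‖ = (n:ℝ) - s := by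
      intro s hs0 hsn
      have hrw : x + s • (-ν) = x - s • ν := by rw [smul_neg, sub_eq_add_neg]
      have hsq : ‖x + s • (-ν)‖^2 = ((n:ℝ) - s)^2 := by
        rw [hrw, norm_sub_sq_real, real_inner_smul_right, hxν, norm_smul, hν1, hxn,
          Real.norm_eq_abs, mul_one, sq_abs]
        ring
      have := congrArg Real.sqrt hsq
      rwa [Real.sqrt_sq (norm_nonneg _), Real.sqrt_sq (by linarith)] at this
    have hmemCB : ∀ s : ℝ, 0 ≤ s → s ≤ (n:ℝ) →
        x + s • (-ν) ∈ closedBall (0:EuclideanSpace ℝ (Fin N)) (n:ℝ) := by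
      intro s h1 h2
      rw [mem_closedBall, dist_zero_right, hnorm s h1 h2]
      linarith
    have hmemS₂ : ∀ s : ℝ, 0 ≤ s → s ≤ (n:ℝ) - (n₀:ℝ) → x + s • (-ν) ∈ S₂ := by
      intro s h1 h2
      refine ⟨hmemCB s h1 (by linarith), ?_⟩
      intro hmem
      rw [mem_ball, dist_zero_right, hnorm s h1 (by linarith)] at hmem
      linarith
    -- the inward directional derivative of ψ
    set gd : ℝ := fderiv ℝ (fun y => ψ y t) x (-ν) with hgddef
    have hdiff : DifferentiableAt ℝ (fun y => ψ y t) x :=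
      ((hψC2 t ⟨ht.1.le, ht.2.le⟩).differentiable two_ne_zero).differentiableAt
    have hline : HasDerivAt (fun s : ℝ => x + s • (-ν)) (-ν) 0 := by
      simpa using ((hasDerivAt_id (0:ℝ)).smul_const (-ν)).const_add x
    have hgF : HasFDerivAt (fun y => ψ y t) (fderiv ℝ (fun y => ψ y t) x)
        (x + (0:ℝ) • (-ν)) := by
      simpa using hdiff.hasFDerivAt
    have hg : HasDerivAt (fun s : ℝ => ψ (x + s • (-ν)) t) gd 0 := by
      have h5 := hgF.comp_hasDerivAt 0 hline
      exact h5
    have hgrad : ⟪gradient (fun y => ψ y t) x, ν⟫ = fderiv ℝ (fun y => ψ y t) x ν := by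
      rw [show gradient (fun y => ψ y t) x
          = (InnerProductSpace.toDual ℝ (EuclideanSpace ℝ (Fin N))).symm
            (fderiv ℝ (fun y => ψ y t) x) from rfl]
      exact InnerProductSpace.toDual_symm_apply
    have hgd : gd = -⟪gradient (fun y => ψ y t) x, ν⟫ := by
      rw [hgrad, hgddef, map_neg]
    have hεpos : (0:ℝ) < (n:ℝ) - (n₀:ℝ) := by linarith
    have hψx0 : ψ x t = 0 := hbdry x hx t ht
    -- upper bound : inward derivative nonnegative
    have hub : 0 ≤ gd := by
      apply deriv_nonneg_of_right_min hεpos hg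
      intro s hs
      show ψ (x + (0:ℝ) • (-ν)) t ≤ ψ (x + s • (-ν)) t
      rw [show x + (0:ℝ) • (-ν) = x by simp, hψx0]
      exact P0 t ht _ (hmemCB s hs.1 (by linarith [hs.2])) t ⟨le_refl t, ht.2.le⟩
    -- lower bound via the barrier
    set w1 : ℝ → ℝ := fun s => c * ((((n:ℝ) - s)^2)^p - K) with hw1def
    have hw1W : ∀ s : ℝ, 0 ≤ s → s ≤ (n:ℝ) → w1 s = Wb c p K (x + s • (-ν)) := by
      intro s h1 h2
      simp only [hw1def, Wb]
      rw [hnorm s h1 h2]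
    have hw10 : w1 0 = 0 := by
      simp only [hw1def, hKdef]
      norm_num
    have hA : HasDerivAt (fun s : ℝ => ((n:ℝ) - s)^2) (-(2*(n:ℝ))) 0 := by
      have h1 : HasDerivAt (fun s:ℝ => (n:ℝ) - s) (-1) 0 := by
        simpa using (hasDerivAt_id (0:ℝ)).const_sub (n:ℝ)
      have h2 := h1.pow 2
      norm_num at h2
      exact h2
    have hApow : HasDerivAt (fun s => (((n:ℝ) - s)^2)^p)
        (p * ((n:ℝ)^2)^(p-1) * (-(2*(n:ℝ)))) 0 := by
      have hne2 : (((n:ℝ) - 0)^2) ≠ 0 := by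
        norm_num
        omega
      have h3 := (Real.hasDerivAt_rpow_const (x := ((n:ℝ) - 0)^2) (p := p)
        (Or.inl hne2)).comp 0 hA
      norm_num at h3
      refine h3.congr_deriv ?_
      ring
    have hw1d : HasDerivAt w1 (c * (p * ((n:ℝ)^2)^(p-1) * (-(2*(n:ℝ))))) 0 := by
      have := (hApow.sub_const K).const_mul c
      convert this using 1
      try ring
    have hh : HasDerivAt (fun s => w1 s - ψ (x + s • (-ν)) t)
        (c * (p * ((n:ℝ)^2)^(p-1) * (-(2*(n:ℝ)))) - gd) 0 := hw1d.sub hg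
    have hmin : 0 ≤ c * (p * ((n:ℝ)^2)^(p-1) * (-(2*(n:ℝ)))) - gd := by
      apply deriv_nonneg_of_right_min hεpos hh
      intro s hs
      have hψle := P2 t ht (x + s • (-ν)) (hmemS₂ s hs.1 hs.2) t ⟨le_refl t, ht.2.le⟩
      have hw1s := hw1W s hs.1 (by linarith [hs.2])
      show w1 0 - ψ (x + (0:ℝ) • (-ν)) t ≤ w1 s - ψ (x + s • (-ν)) t
      rw [show x + (0:ℝ) • (-ν) = x by simp, hψx0, hw10, hw1s]
      simpa using hψle
    -- the numerical identity
    have hkey : (((n:ℝ)^2)^(p-1)) * (n:ℝ) = ((n:ℝ)^(N-1))⁻¹ := by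
      have e1 : (((n:ℝ)^2)^(p-1)) = (n:ℝ)^(2*(p-1)) := by
        rw [show ((n:ℝ)^2) = (n:ℝ)^((2:ℕ):ℝ) by rw [Real.rpow_natCast],
          ← Real.rpow_mul hnpos.le]
        norm_num
      rw [e1, ← Real.rpow_add_one hnne]
      have e3 : 2*(p-1) + 1 = -(((N - 1 : ℕ)) : ℝ) := by
        rw [Nat.cast_sub (by omega : 1 ≤ N)]
        push_cast
        linarith
      rw [e3, Real.rpow_neg hnpos.le, Real.rpow_natCast]
    have hd_eq : c * (p * ((n:ℝ)^2)^(p-1) * (-(2*(n:ℝ))))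
        = c * ((N:ℝ) - 2) * ((n:ℝ)^(N-1))⁻¹ := by
      have e4 : c * (p * ((n:ℝ)^2)^(p-1) * (-(2*(n:ℝ))))
          = c * (-(2*p)) * ((((n:ℝ)^2)^(p-1)) * (n:ℝ)) := by ring
      rw [e4, hkey, show -(2*p) = (N:ℝ) - 2 by rw [hp]; ring]
    have hpowpos : (0:ℝ) < ((n:ℝ)^(N-1)) := by positivity
    have hCn : c * ((N:ℝ) - 2) ≤ C := by
      rw [hCdef]
      nlinarith
    have hgdle : gd ≤ C / (n:ℝ)^(N-1) := by
      rw [div_eq_mul_inv]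
      have h1 : gd ≤ c * ((N:ℝ) - 2) * ((n:ℝ)^(N-1))⁻¹ := by
        rw [← hd_eq]; linarith
      have h2 : c * ((N:ℝ) - 2) * ((n:ℝ)^(N-1))⁻¹ ≤ C * ((n:ℝ)^(N-1))⁻¹ :=
        mul_le_mul_of_nonneg_right hCn (by positivity)
      linarith
    constructor
    · linarith [hgd, hgdle]
    · linarith [hgd, hub]
end

section
/- Let N ≥ 3, R̂ > 0, let ρ : ℝ^N → ℝ be continuous with ρ > 0 everywhere, and let ρ̄ : [R̂,∞) → ℝ be continuous with ρ(x) ≤ ρ̄(|x|) for every x with |x| ≥ R̂ and ∫_{R̂}^∞ η ρ̄(η) dη < ∞. Then there exists a twice continuously differentiable function v : [R̂,∞) → ℝ which is positive, nonincreasing, and satisfies v(r) → 0 as r → ∞, such that the radial function V(x) := v(|x|) satisfies ΔV(x) ≤ −ρ(x) for every x with |x| > R̂. -/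
/-!
For a radial `V = v(|x|)` one has `ΔV = r^(1-N) (r^(N-1) v')'`, so it suffices to solve this radial
equation with right-hand side `-ρ̄`, extended by `ρ̄(R̂)` below `R̂`. Take
`-v'(r) = r^(1-N) (1 + ∫_R̂^r t^(N-1) ρ̄)`, which is positive thanks to the `1`. Integrating by
parts, `v' = P'` for `P(r) = ((1 + ∫_R̂^r t^(N-1) ρ̄) / r^(N-2) - ∫_R̂^r t ρ̄) / (N-2)`, and
`P ≥ -(N-2)⁻¹ ∫_R̂^∞ t ρ̄` because `N ≥ 3`. So the strictly decreasing `P` has a limit `ℓ` at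
infinity, and `v = P - ℓ`.
-/

open MeasureTheory Metric Set Filter

open scoped Topology RealInnerProductSpace

section RadialLaplacian

open Laplacian InnerProductSpace

variable {E : Type*} [NormedAddCommGroup E] [InnerProductSpace ℝ E]

theorem hasFDerivAt_norm {x : E} (hx : x ≠ 0) :
    HasFDerivAt (fun y : E => ‖y‖) (‖x‖⁻¹ • innerSL ℝ x) x := by
  have h := (Real.hasDerivAt_sqrt (pow_ne_zero 2 (norm_ne_zero_iff.2 hx))).comp_hasFDerivAt x
    (hasStrictFDerivAt_norm_sq x).hasFDerivAt
  have hsqrt : (Real.sqrt ∘ fun y : E => ‖y‖ ^ 2) = fun y => ‖y‖ := by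
    funext y; simp
  rw [hsqrt, Real.sqrt_sq (norm_nonneg x)] at h
  refine h.congr_fderiv ?_
  ext u
  simp only [smul_apply, coe_innerSL_apply, nsmul_eq_mul, Nat.cast_ofNat, smul_eq_mul]
  field_simp

theorem HasDerivAt.hasFDerivAt_comp_norm {v : ℝ → ℝ} {d : ℝ} {x : E} (hx : x ≠ 0)
    (hv : HasDerivAt v d ‖x‖) :
    HasFDerivAt (fun y : E => v ‖y‖) ((d / ‖x‖) • innerSL ℝ x) x :=
  (hv.comp_hasFDerivAt x (hasFDerivAt_norm hx)).congr_fderiv (by rw [smul_smul, div_eq_mul_inv])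

variable {v v' : ℝ → ℝ} {x : E} {v'' : ℝ}

theorem iteratedFDeriv_two_comp_norm (hv : ∀ t, 0 < t → HasDerivAt v (v' t) t)
    (hv' : HasDerivAt v' v'' ‖x‖) (hx : x ≠ 0) (u w : E) :
    iteratedFDeriv ℝ 2 (fun y : E => v ‖y‖) x ![u, w] =
      v' ‖x‖ / ‖x‖ * ⟪u, w⟫ + (v'' - v' ‖x‖ / ‖x‖) / ‖x‖ ^ 2 * (⟪x, u⟫ * ⟪x, w⟫) := by
  have hx' : ‖x‖ ≠ 0 := norm_ne_zero_iff.2 hx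
  have hfderiv : fderiv ℝ (fun y : E => v ‖y‖) =ᶠ[𝓝 x]
      fun y => (v' ‖y‖ / ‖y‖) • innerSL ℝ y := by
    filter_upwards [isOpen_ne.mem_nhds hx] with y hy
    exact ((hv _ (norm_pos_iff.2 hy)).hasFDerivAt_comp_norm hy).fderiv
  have hquot : HasDerivAt (fun t => v' t / t) ((v'' - v' ‖x‖ / ‖x‖) / ‖x‖) ‖x‖ :=
    (hv'.div (hasDerivAt_id' _) hx').congr_deriv (by field_simp)
  have hsecond : HasFDerivAt (fun y : E => (v' ‖y‖ / ‖y‖) • innerSL ℝ y) _ x :=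
    (hquot.hasFDerivAt_comp_norm hx).smul (innerSL ℝ : E →L[ℝ] E →L[ℝ] ℝ).hasFDerivAt
  rw [iteratedFDeriv_two_apply, hfderiv.fderiv_eq, hsecond.fderiv]
  have hinner : ∀ u w : E, (innerSL ℝ : E →L[ℝ] E →L[ℝ] ℝ) u w = ⟪u, w⟫ := fun _ _ => rfl
  simp only [Matrix.cons_val_zero, Matrix.cons_val_one, Matrix.cons_val_fin_one, add_apply,
    smul_apply, ContinuousLinearMap.smulRight_apply, hinner, smul_eq_mul]
  field_simp

theorem laplacian_comp_norm [FiniteDimensional ℝ E] (hv : ∀ t, 0 < t → HasDerivAt v (v' t) t)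
    (hv' : HasDerivAt v' v'' ‖x‖) (hx : x ≠ 0) :
    Δ (fun y : E => v ‖y‖) x = v'' + (Module.finrank ℝ E - 1) / ‖x‖ * v' ‖x‖ := by
  have hx' : ‖x‖ ≠ 0 := norm_ne_zero_iff.2 hx
  simp only [laplacian_eq_iteratedFDeriv_stdOrthonormalBasis,
    iteratedFDeriv_two_comp_norm hv hv' hx, Finset.sum_add_distrib, ← Finset.mul_sum,
    real_inner_self_eq_norm_sq, OrthonormalBasis.norm_eq_one, one_pow, Finset.sum_const,
    Finset.card_univ, Fintype.card_fin, nsmul_eq_mul, mul_one, ← sq,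
    (stdOrthonormalBasis ℝ E).sum_sq_inner_left x]
  field_simp
  ring

theorem lap_eq_laplacian {N : ℕ} (f : EuclideanSpace ℝ (Fin N) → ℝ) : lap f = Δ f := by
  rw [laplacian_eq_iteratedFDeriv_orthonormalBasis f (EuclideanSpace.basisFun (Fin N) ℝ)]
  ext x
  simp [lap]

end RadialLaplacian

section RadialProfile

variable (m : ℕ) (a : ℝ) (f : ℝ → ℝ)

-- `radialFlux m a f` and `radialPotential m a f` are `-v'` and `P` of the header, with
-- `N = m + 2`, `R̂ = a` and `ρ̄ = f`.
noncomputable def radialFlux (r : ℝ) : ℝ :=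
  (1 + ∫ t in a..r, t ^ (m + 1) * f t) / r ^ (m + 1)

noncomputable def radialPotential (r : ℝ) : ℝ :=
  ((1 + ∫ t in a..r, t ^ (m + 1) * f t) / r ^ m - ∫ t in a..r, t * f t) / m

variable {m a f}

theorem hasDerivAt_intervalIntegral_pow_mul (n : ℕ) (hf : Continuous f) (r : ℝ) :
    HasDerivAt (fun r => ∫ t in a..r, t ^ n * f t) (r ^ n * f r) r :=
  ((continuous_pow n).mul hf |>.integral_hasStrictDerivAt a r).hasDerivAt

theorem hasDerivAt_radialFlux (hf : Continuous f) {r : ℝ} (hr : r ≠ 0) :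
    HasDerivAt (radialFlux m a f) (f r - (m + 1) / r * radialFlux m a f r) r := by
  refine (((hasDerivAt_intervalIntegral_pow_mul (m + 1) hf r).const_add 1).div
    (hasDerivAt_pow (m + 1) r) (pow_ne_zero _ hr)).congr_deriv ?_
  simp only [radialFlux, Nat.add_sub_cancel]
  push_cast
  field_simp
  ring

theorem hasDerivAt_radialPotential (hm : m ≠ 0) (hf : Continuous f) {r : ℝ} (hr : r ≠ 0) :
    HasDerivAt (radialPotential m a f) (-radialFlux m a f r) r := by
  have hmoment := hasDerivAt_intervalIntegral_pow_mul (a := a) 1 hf r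
  simp only [pow_one] at hmoment
  refine (((((hasDerivAt_intervalIntegral_pow_mul (m + 1) hf r).const_add 1).div
    (hasDerivAt_pow m r) (pow_ne_zero _ hr)).sub hmoment).div_const (m : ℝ)).congr_deriv ?_
  obtain ⟨k, rfl⟩ := Nat.exists_eq_add_one_of_ne_zero hm
  simp only [radialFlux, Nat.add_sub_cancel]
  push_cast
  field_simp
  ring

theorem intervalIntegral_pow_mul_nonneg (n : ℕ) (ha : 0 ≤ a) (hf : ∀ t ∈ Ici a, 0 ≤ f t)
    {r : ℝ} (hr : a ≤ r) : 0 ≤ ∫ t in a..r, t ^ n * f t :=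
  intervalIntegral.integral_nonneg hr fun t ht =>
    mul_nonneg (pow_nonneg (ha.trans ht.1) _) (hf t ht.1)

theorem radialFlux_pos (ha : 0 < a) (hf : ∀ t ∈ Ici a, 0 ≤ f t) {r : ℝ} (hr : a ≤ r) :
    0 < radialFlux m a f r := by
  have := intervalIntegral_pow_mul_nonneg (m + 1) ha.le hf hr
  have := ha.trans_le hr
  unfold radialFlux
  positivity

theorem strictAntiOn_radialPotential (hm : m ≠ 0) (ha : 0 < a) (hf : Continuous f)
    (hf0 : ∀ t ∈ Ici a, 0 ≤ f t) : StrictAntiOn (radialPotential m a f) (Ici a) := by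
  have hderiv : ∀ r ∈ Ici a, HasDerivAt (radialPotential m a f) (-radialFlux m a f r) r :=
    fun r hr => hasDerivAt_radialPotential hm hf (ha.trans_le hr).ne'
  refine strictAntiOn_of_deriv_neg (convex_Ici a)
    (fun r hr => (hderiv r hr).continuousAt.continuousWithinAt) fun r hr => ?_
  rw [interior_Ici] at hr
  rw [(hderiv r (mem_Ici.2 hr.le)).deriv, neg_lt_zero]
  exact radialFlux_pos ha hf0 hr.le

theorem neg_integral_div_le_radialPotential (ha : 0 < a) (hf : ∀ t ∈ Ici a, 0 ≤ f t)
    (hint : IntegrableOn (fun t => t * f t) (Ici a)) {r : ℝ} (hr : a ≤ r) :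
    -(∫ t in Ici a, t * f t) / m ≤ radialPotential m a f r := by
  have hmass := intervalIntegral_pow_mul_nonneg (m + 1) ha.le hf hr
  have hmoment : ∫ t in a..r, t * f t ≤ ∫ t in Ici a, t * f t := by
    rw [intervalIntegral.integral_of_le hr]
    refine setIntegral_mono_set hint ?_
      (Ioc_subset_Icc_self.trans Icc_subset_Ici_self).eventuallyLE
    filter_upwards [ae_restrict_mem measurableSet_Ici] with t ht
    exact mul_nonneg (ha.le.trans ht) (hf t ht)
  have := ha.trans_le hr
  unfold radialPotential
  gcongr
  have : 0 ≤ (1 + ∫ t in a..r, t ^ (m + 1) * f t) / r ^ m := by positivity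
  linarith

theorem StrictAntiOn.exists_tendsto_atTop_lt {u : ℝ → ℝ} {a : ℝ} (hu : StrictAntiOn u (Ici a))
    (hbdd : BddBelow (u '' Ici a)) : ∃ l, Tendsto u atTop (𝓝 l) ∧ ∀ r ∈ Ici a, l < u r := by
  set w : ℝ → ℝ := fun r => u (max r a)
  have hw : Antitone w := fun r s hrs =>
    hu.antitoneOn (le_max_right r a) (le_max_right s a) (max_le_max_right a hrs)
  have hwbdd : BddBelow (range w) :=
    hbdd.mono (range_subset_iff.2 fun r => mem_image_of_mem u (le_max_right r a))
  have hwu : w =ᶠ[atTop] u := by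
    filter_upwards [eventually_ge_atTop a] with r hr
    simp only [w, max_eq_left hr]
  refine ⟨⨅ r, w r, (tendsto_atTop_ciInf hw hwbdd).congr' hwu, fun r hr => ?_⟩
  have hr1 : r + 1 ∈ Ici a := mem_Ici.2 (by linarith [mem_Ici.1 hr])
  calc ⨅ r, w r ≤ w (r + 1) := ciInf_le hwbdd _
    _ = u (r + 1) := by simp only [w, max_eq_left (mem_Ici.1 hr1)]
    _ < u r := hu hr hr1 (lt_add_one r)

theorem contDiffOn_two_of_hasDerivAt {s : Set ℝ} (hs : IsOpen s) {v g g' : ℝ → ℝ}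
    (hv : ∀ r ∈ s, HasDerivAt v (g r) r) (hg : ∀ r ∈ s, HasDerivAt g (g' r) r)
    (hg' : ContinuousOn g' s) : ContDiffOn ℝ 2 v s := by
  rw [show (2 : WithTop ℕ∞) = 1 + 1 from rfl, contDiffOn_succ_iff_deriv_of_isOpen hs]
  refine ⟨fun r hr => (hv r hr).differentiableAt.differentiableWithinAt, by simp, ?_⟩
  refine ContDiffOn.congr ?_ fun r hr => (hv r hr).deriv
  rw [show (1 : WithTop ℕ∞) = 0 + 1 from rfl, contDiffOn_succ_iff_deriv_of_isOpen hs]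
  refine ⟨fun r hr => (hg r hr).differentiableAt.differentiableWithinAt, by simp, ?_⟩
  exact (contDiffOn_zero.2 hg').congr fun r hr => (hg r hr).deriv

theorem exists_decaying_radial_solution (hm : m ≠ 0) (ha : 0 < a) (hf : Continuous f)
    (hf0 : ∀ t ∈ Ici a, 0 ≤ f t) (hint : IntegrableOn (fun t => t * f t) (Ici a)) :
    ∃ v g : ℝ → ℝ, (∀ r, 0 < r → HasDerivAt v (g r) r) ∧
      (∀ r, 0 < r → HasDerivAt g (-f r - (m + 1) / r * g r) r) ∧
      ContDiffOn ℝ 2 v (Ioi 0) ∧ (∀ r ∈ Ici a, 0 < v r) ∧ AntitoneOn v (Ici a) ∧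
      Tendsto v atTop (𝓝 0) := by
  have hanti := strictAntiOn_radialPotential hm ha hf hf0
  obtain ⟨l, hlim, hl⟩ := hanti.exists_tendsto_atTop_lt
    ⟨_, forall_mem_image.2 fun r hr => neg_integral_div_le_radialPotential ha hf0 hint hr⟩
  have hv (r) (hr : 0 < r) :
      HasDerivAt (fun r => radialPotential m a f r - l) (-radialFlux m a f r) r :=
    (hasDerivAt_radialPotential hm hf hr.ne').sub_const l
  have hg (r) (hr : 0 < r) : HasDerivAt (fun r => -radialFlux m a f r)
      (-f r - (m + 1) / r * -radialFlux m a f r) r :=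
    (hasDerivAt_radialFlux hf hr.ne').neg.congr_deriv (by ring)
  refine ⟨fun r => radialPotential m a f r - l, fun r => -radialFlux m a f r, hv, hg,
    contDiffOn_two_of_hasDerivAt isOpen_Ioi hv hg ?_, fun r hr => sub_pos.2 (hl r hr),
    fun r hr s hs hrs => sub_le_sub_right (hanti.antitoneOn hr hs hrs) l, ?_⟩
  · exact hf.continuousOn.neg.sub
      ((continuousOn_const.div continuousOn_id fun r hr => hr.ne').mul
        fun r hr => (hg r hr).continuousAt.continuousWithinAt)
  · simpa using hlim.sub_const l

end RadialProfile

theorem radial_barrier_general (N : ℕ) (hN : 3 ≤ N) (Rh : ℝ) (hRh : 0 < Rh)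
    (ρ : EuclideanSpace ℝ (Fin N) → ℝ) (hρpos : ∀ x, 0 < ρ x)
    (ρbar : ℝ → ℝ) (hρbarc : ContinuousOn ρbar (Ici Rh))
    (hρbarle : ∀ x : EuclideanSpace ℝ (Fin N), Rh ≤ ‖x‖ → ρ x ≤ ρbar ‖x‖)
    (hρbarint : IntegrableOn (fun η => η * ρbar η) (Ici Rh)) :
    ∃ v : ℝ → ℝ, ContDiffOn ℝ 2 v (Ici Rh) ∧
      (∀ r ∈ Ici Rh, 0 < v r) ∧
      AntitoneOn v (Ici Rh) ∧
      Tendsto v atTop (nhds 0) ∧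
      ∀ x : EuclideanSpace ℝ (Fin N), Rh < ‖x‖ →
        lap (fun y : EuclideanSpace ℝ (Fin N) => v ‖y‖) x ≤ -ρ x := by
  have : Nonempty (Fin N) := ⟨⟨0, by omega⟩⟩
  set f : ℝ → ℝ := fun t => ρbar (max t Rh)
  have hf : Continuous f :=
    hρbarc.comp_continuous (continuous_id.max continuous_const) fun t => le_max_right t Rh
  have hf_eq : ∀ t ∈ Ici Rh, f t = ρbar t := fun t ht => congrArg ρbar (max_eq_left ht)
  have hf0 : ∀ t ∈ Ici Rh, 0 ≤ f t := by
    intro t ht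
    obtain ⟨x, rfl⟩ := exists_norm_eq (EuclideanSpace ℝ (Fin N)) (hRh.le.trans ht)
    rw [hf_eq _ ht]
    exact (hρpos x).le.trans (hρbarle x ht)
  obtain ⟨v, g, hv, hg, hC2, hpos, hanti, hlim⟩ := exists_decaying_radial_solution (m := N - 2)
    (by omega) hRh hf hf0
    (hρbarint.congr_fun (fun t ht => by rw [hf_eq t ht]) measurableSet_Ici)
  refine ⟨v, hC2.mono fun r hr => hRh.trans_le hr, hpos, hanti, hlim, fun x hx => ?_⟩
  have hx0 : 0 < ‖x‖ := hRh.trans hx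
  have hdim : ((N - 2 : ℕ) : ℝ) + 1 = N - 1 := by rw [Nat.cast_sub (by omega)]; push_cast; ring
  rw [lap_eq_laplacian, laplacian_comp_norm hv (hg _ hx0) (norm_pos_iff.1 hx0),
    finrank_euclideanSpace_fin, ← hdim, hf_eq _ hx.le]
  linarith [hρbarle x hx.le]

/-- if `ρ` is dominated at infinity by a radial profile `ρ̄` with
`∫ η ρ̄(η) dη < ∞`, there is a positive nonincreasing `C²` radial barrier `V`
vanishing at infinity with `ΔV ≤ -ρ` outside `B_R̂`. -/
theorem radial_barrier (N : ℕ) (hN : 3 ≤ N) (Rh : ℝ) (hRh : 0 < Rh)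
    (ρ : EuclideanSpace ℝ (Fin N) → ℝ) (hρc : Continuous ρ) (hρpos : ∀ x, 0 < ρ x)
    (ρbar : ℝ → ℝ) (hρbarc : ContinuousOn ρbar (Ici Rh))
    (hρbarle : ∀ x : EuclideanSpace ℝ (Fin N), Rh ≤ ‖x‖ → ρ x ≤ ρbar ‖x‖)
    (hρbarint : IntegrableOn (fun η => η * ρbar η) (Ici Rh)) :
    ∃ v : ℝ → ℝ, ContDiffOn ℝ 2 v (Ici Rh) ∧
      (∀ r ∈ Ici Rh, 0 < v r) ∧
      AntitoneOn v (Ici Rh) ∧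
      Tendsto v atTop (nhds 0) ∧
      ∀ x : EuclideanSpace ℝ (Fin N), Rh < ‖x‖ →
        lap (fun y : EuclideanSpace ℝ (Fin N) => v ‖y‖) x ≤ -ρ x :=
  radial_barrier_general N hN Rh hRh ρ hρpos ρbar hρbarc hρbarle hρbarint
end

section
/- Let N ≥ 1, let Ω ⊆ ℝ^N be open, let ρ : Ω → ℝ satisfy ρ(x) > 0 for all x ∈ Ω, and let V : Ω → ℝ be twice continuously differentiable with ΔV(x) ≤ −ρ(x) for all x ∈ Ω. Let G : ℝ → ℝ be a continuously differentiable, strictly increasing bijection of ℝ onto ℝ with G'(s) ≥ α₀ for all s ∈ ℝ, for some α₀ > 0. Let M, λ, δ > 0 with M ≥ 2λδ/α₀, let A ∈ ℝ and t₀ ∈ ℝ, and define w(x,t) := G^{-1}(−M V(x) + A − λ (t − t₀)²) for x ∈ Ω and t ∈ ℝ. Then for every x ∈ Ω and every t with |t − t₀| ≤ δ, w is differentiable in t at (x,t), the function y ↦ G(w(y,t)) is twice continuously differentiable on Ω, and ρ(x) ∂_t w(x,t) − Δ_y[G(w(·,t))](x) ≤ 0. -/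
/-!
Since `G (w(·, t)) = -M V + const`, its Laplacian is `-M ΔV ≥ M ρ`. On the other hand
`∂ₜ w = -2λ(t - t₀) / G'(w) ≤ 2λδ / α₀ ≤ M` by the inverse function rule, so
`ρ ∂ₜ w ≤ M ρ ≤ Δ[G(w)]`.
-/

open MeasureTheory Metric Set Filter

lemma lap_const_mul_add_const {N : ℕ} {V : EuclideanSpace ℝ (Fin N) → ℝ}
    {x : EuclideanSpace ℝ (Fin N)} (hV : ContDiffAt ℝ 2 V x) (c C : ℝ) :
    lap (fun y => c * V y + C) x = c * lap V x := by
  have hD : iteratedFDeriv ℝ 2 (fun y => c * V y + C) x = c • iteratedFDeriv ℝ 2 V x := by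
    simp only [← smul_eq_mul]
    rw [fun_iteratedFDeriv_add_apply (hV.const_smul c) contDiffAt_const,
      iteratedFDeriv_const_of_ne two_ne_zero, iteratedFDeriv_const_smul_apply' hV]
    simp
  simp [lap, hD, Finset.mul_sum]

lemma hasDerivAt_invFun_of_deriv_pos {G : ℝ → ℝ} (hsurj : Function.Surjective G)
    (hG' : ∀ s, 0 < deriv G s) (z : ℝ) :
    HasDerivAt (Function.invFun G) (deriv G (Function.invFun G z))⁻¹ z := by
  have hmono : StrictMono G := strictMono_of_deriv_pos hG'
  let e := hmono.orderIsoOfSurjective G hsurj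
  have hinv : Function.invFun G = e.symm := funext fun z =>
    hmono.injective <| by
      rw [Function.rightInverse_invFun hsurj z]
      exact (e.apply_symm_apply z).symm
  exact .of_local_left_inverse (hinv ▸ e.symm.continuous.continuousAt)
    (differentiableAt_of_deriv_ne_zero (hG' _).ne').hasDerivAt (hG' _).ne'
    (.of_forall (Function.rightInverse_invFun hsurj))

theorem barrier_subsolution_general (N : ℕ)
    (Ω : Set (EuclideanSpace ℝ (Fin N))) (hΩ : IsOpen Ω)
    (ρ : EuclideanSpace ℝ (Fin N) → ℝ) (hρpos : ∀ x ∈ Ω, 0 < ρ x)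
    (V : EuclideanSpace ℝ (Fin N) → ℝ) (hV : ContDiffOn ℝ 2 V Ω)
    (hVρ : ∀ x ∈ Ω, lap V x ≤ -ρ x)
    (G : ℝ → ℝ)
    (hGbij : Function.Bijective G)
    (α₀ : ℝ) (hα₀ : 0 < α₀) (hG' : ∀ s : ℝ, α₀ ≤ deriv G s)
    (M lam δ : ℝ) (hM : 0 < M) (hlam : 0 < lam) (hδ : 0 < δ)
    (hMge : 2 * lam * δ / α₀ ≤ M)
    (A t₀ : ℝ) :
    ∀ x ∈ Ω, ∀ t : ℝ, |t - t₀| ≤ δ →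
      DifferentiableAt ℝ
        (fun s => Function.invFun G (-(M * V x) + A - lam * (s - t₀) ^ 2)) t ∧
      ContDiffOn ℝ 2
        (fun y => G (Function.invFun G (-(M * V y) + A - lam * (t - t₀) ^ 2))) Ω ∧
      ρ x * deriv (fun s => Function.invFun G (-(M * V x) + A - lam * (s - t₀) ^ 2)) t -
        lap (fun y => G (Function.invFun G (-(M * V y) + A - lam * (t - t₀) ^ 2))) x ≤ 0 := by
  intro x hx t ht
  set g := deriv G (Function.invFun G (-(M * V x) + A - lam * (t - t₀) ^ 2))
  have hw : HasDerivAt (fun s => Function.invFun G (-(M * V x) + A - lam * (s - t₀) ^ 2))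
      (-(2 * lam * (t - t₀)) / g) t := by
    have hinner : HasDerivAt (fun s : ℝ => -(M * V x) + A - lam * (s - t₀) ^ 2)
        (-(2 * lam * (t - t₀))) t :=
      ((((hasDerivAt_id' t).sub_const t₀).fun_pow 2).const_mul lam).const_sub _
        |>.congr_deriv (by ring)
    exact ((hasDerivAt_invFun_of_deriv_pos hGbij.2 (fun s => hα₀.trans_le (hG' s)) _).comp t
      hinner).congr_deriv (inv_mul_eq_div _ _)
  have hprofile : (fun y => G (Function.invFun G (-(M * V y) + A - lam * (t - t₀) ^ 2)))
      = fun y => -M * V y + (A - lam * (t - t₀) ^ 2) := by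
    funext y
    rw [Function.rightInverse_invFun hGbij.2]
    ring
  refine ⟨hw.differentiableAt, hprofile ▸ by fun_prop, ?_⟩
  have hspeed : -(2 * lam * (t - t₀)) / g ≤ M :=
    calc -(2 * lam * (t - t₀)) / g ≤ 2 * lam * δ / α₀ := by
          refine div_le_div₀ (by positivity) ?_ hα₀ (hG' _)
          nlinarith [neg_le_abs (t - t₀)]
      _ ≤ M := hMge
  rw [hw.deriv, hprofile, lap_const_mul_add_const (hV.contDiffAt (hΩ.mem_nhds hx))]
  nlinarith [mul_le_mul_of_nonneg_left hspeed (hρpos x hx).le,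
    mul_le_mul_of_nonneg_left (hVρ x hx) hM.le]

/-- the time-dependent barrier
`w(x,t) = G⁻¹(-M V(x) + A - λ(t-t₀)²)` is a (classical) subsolution of
`ρ ∂ₜ w = Δ[G(w)]` for `|t - t₀| ≤ δ`, provided `ΔV ≤ -ρ`, `G' ≥ α₀ > 0` and
`M ≥ 2λδ/α₀`. -/
theorem barrier_subsolution (N : ℕ) (hN : 1 ≤ N)
    (Ω : Set (EuclideanSpace ℝ (Fin N))) (hΩ : IsOpen Ω)
    (ρ : EuclideanSpace ℝ (Fin N) → ℝ) (hρpos : ∀ x ∈ Ω, 0 < ρ x)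
    (V : EuclideanSpace ℝ (Fin N) → ℝ) (hV : ContDiffOn ℝ 2 V Ω)
    (hVρ : ∀ x ∈ Ω, lap V x ≤ -ρ x)
    (G : ℝ → ℝ) (hG : ContDiff ℝ 1 G) (hGmono : StrictMono G)
    (hGbij : Function.Bijective G)
    (α₀ : ℝ) (hα₀ : 0 < α₀) (hG' : ∀ s : ℝ, α₀ ≤ deriv G s)
    (M lam δ : ℝ) (hM : 0 < M) (hlam : 0 < lam) (hδ : 0 < δ)
    (hMge : 2 * lam * δ / α₀ ≤ M)
    (A t₀ : ℝ) :
    ∀ x ∈ Ω, ∀ t : ℝ, |t - t₀| ≤ δ →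
      DifferentiableAt ℝ
        (fun s => Function.invFun G (-(M * V x) + A - lam * (s - t₀) ^ 2)) t ∧
      ContDiffOn ℝ 2
        (fun y => G (Function.invFun G (-(M * V y) + A - lam * (t - t₀) ^ 2))) Ω ∧
      ρ x * deriv (fun s => Function.invFun G (-(M * V x) + A - lam * (s - t₀) ^ 2)) t -
        lap (fun y => G (Function.invFun G (-(M * V y) + A - lam * (t - t₀) ^ 2))) x ≤ 0 :=
  barrier_subsolution_general N Ω hΩ ρ hρpos V hV hVρ G hGbij α₀ hα₀ hG' M lam δ hM hlam hδ hMge A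
    t₀
end
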